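/- For all real α, β ≠ 0, γ and integers 0 ≤ k ≤ n+1 with k ≥ 1: S(n+1,k;α,-β,-γ) = S(n,k-1;α,-β,-γ) + (-kβ - nα - γ)·S(n,k;α,-β,-γ), where S is defined by the explicit sum formula; moreover S(n,0;α,β,γ) = (γ|α)_n and S(n,n;α,β,γ) = 1. -/

import Mathlib

open Finset

/-- Generalized factorial polynomial `(t|α)_n = ∏_{j=0}^{n-1} (t - jα)`. -/
noncomputable def gfact (t α : ℝ) (n : ℕ) : ℝ := ∏ j ∈ Finset.range n, (t - j * α)

/-- Hsu–Shiue generalized Stirling numbers (explicit formula, β ≠ 0). -/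
noncomputable def HS (n k : ℕ) (α β γ : ℝ) : ℝ :=
  (1 / (β ^ k * (Nat.factorial k : ℝ))) *
    ∑ s ∈ Finset.range (k + 1), (-1 : ℝ) ^ (k - s) * (Nat.choose k s : ℝ) * gfact (β * s + γ) α n

/-- Second-type higher order generalized geometric polynomials. -/
noncomputable def A (lam : ℕ) (x : ℝ) (n : ℕ) (α β γ : ℝ) : ℝ :=
  ∑ k ∈ Finset.range (n + 1),
    (Nat.choose (k + lam - 1) k : ℝ) * (-1 : ℝ) ^ (n + k) * β ^ k * (Nat.factorial k : ℝ) *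
      HS n k α (-β) (-γ) * x ^ k

/-- Numerator sum of `HS`. -/
noncomputable def Tsum (α β γ : ℝ) (n k : ℕ) : ℝ :=
  ∑ s ∈ Finset.range (k + 1), (-1 : ℝ) ^ (k - s) * (Nat.choose k s : ℝ) * gfact (β * s + γ) α n

lemma HS_eq (n k : ℕ) (α β γ : ℝ) :
    HS n k α β γ = (1 / (β ^ k * (Nat.factorial k : ℝ))) * Tsum α β γ n k := rfl

lemma gfact_succ (t α : ℝ) (n : ℕ) : gfact t α (n + 1) = gfact t α n * (t - n * α) :=
  Finset.prod_range_succ _ _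

lemma nat_id (k s : ℕ) :
    (k + 1 - s) * Nat.choose (k + 1) s = (k + 1) * Nat.choose k s := by
  rw [Nat.mul_comm, ← Nat.choose_succ_right_eq, ← Nat.add_one_mul_choose_eq]

lemma Trec (α β γ : ℝ) (n k : ℕ) :
    Tsum α β γ (n + 1) (k + 1) =
      β * (k + 1) * Tsum α β γ n k + (β * (k + 1) + γ - n * α) * Tsum α β γ n (k + 1) := by
  have hT : Tsum α β γ n k =
      ∑ s ∈ Finset.range (k + 2), (-1 : ℝ) ^ (k - s) * (Nat.choose k s : ℝ)
        * gfact (β * s + γ) α n := by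
    rw [Finset.sum_range_succ, Nat.choose_succ_self]
    simp [Tsum]
  rw [hT]
  unfold Tsum
  rw [Finset.mul_sum, Finset.mul_sum, ← Finset.sum_add_distrib]
  apply Finset.sum_congr rfl
  intro s hs
  rw [Finset.mem_range] at hs
  rw [gfact_succ]
  have key : (-1 : ℝ) ^ (k + 1 - s) * (Nat.choose (k + 1) s : ℝ) * ((s : ℝ) - (k + 1))
      = (k + 1) * (-1 : ℝ) ^ (k - s) * (Nat.choose k s : ℝ) := by
    rcases Nat.lt_succ_iff_lt_or_eq.mp hs with h | h
    · have h' : s ≤ k := Nat.lt_succ_iff.mp h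
      have h1 : k + 1 - s = (k - s) + 1 := by omega
      have h3 : ((k + 1 - s : ℕ) : ℝ) * (Nat.choose (k + 1) s : ℝ)
          = ((k + 1 : ℕ) : ℝ) * (Nat.choose k s : ℝ) := by
        exact_mod_cast congrArg (Nat.cast : ℕ → ℝ) (nat_id k s)
      have h4 : ((k + 1 - s : ℕ) : ℝ) = ((k : ℝ) + 1) - s := by
        rw [Nat.cast_sub (by omega)]; push_cast; ring
      rw [h4] at h3
      push_cast at h3
      rw [h1, pow_succ]
      linear_combination ((-1 : ℝ) ^ (k - s)) * h3
    · subst h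
      simp [Nat.choose_succ_self]
  linear_combination (β * gfact (β * s + γ) α n) * key

lemma Tzero (α β γ : ℝ) : ∀ n k : ℕ, n < k → Tsum α β γ n k = 0 := by
  intro n
  induction n with
  | zero =>
    intro k hk
    have hsum : Tsum α β γ 0 k = (-1 : ℝ) ^ k *
        ∑ s ∈ Finset.range (k + 1), (-1 : ℝ) ^ s * (Nat.choose k s : ℝ) := by
      unfold Tsum
      rw [Finset.mul_sum]
      apply Finset.sum_congr rfl
      intro s hs
      rw [Finset.mem_range, Nat.lt_succ_iff] at hs
      have hg : gfact (β * s + γ) α 0 = 1 := rfl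
      have hsgn : (-1 : ℝ) ^ (k - s) = (-1 : ℝ) ^ k * (-1 : ℝ) ^ s := by
        calc (-1 : ℝ) ^ (k - s) = (-1 : ℝ) ^ (k - s) * ((-1 : ℝ) ^ s * (-1 : ℝ) ^ s) := by
              rw [← mul_pow]; norm_num
          _ = (-1 : ℝ) ^ k * (-1 : ℝ) ^ s := by
              rw [← mul_assoc, ← pow_add, Nat.sub_add_cancel hs]
      rw [hg, hsgn]; ring
    have hz : ∑ s ∈ Finset.range (k + 1), (-1 : ℝ) ^ s * (Nat.choose k s : ℝ) = 0 := by
      have := Int.alternating_sum_range_choose_of_ne (by omega : k ≠ 0)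
      exact_mod_cast congrArg (Int.cast : ℤ → ℝ) this
    rw [hsum, hz, mul_zero]
  | succ n ih =>
    intro k hk
    obtain ⟨k', rfl⟩ : ∃ k', k = k' + 1 := ⟨k - 1, by omega⟩
    rw [Trec, ih k' (by omega), ih (k' + 1) (by omega)]
    ring

lemma Tnn (α β γ : ℝ) : ∀ n : ℕ, Tsum α β γ n n = β ^ n * (Nat.factorial n : ℝ) := by
  intro n
  induction n with
  | zero => simp [Tsum, gfact]
  | succ n ih =>
    rw [Trec, ih, Tzero α β γ n (n + 1) (by omega)]
    rw [Nat.factorial_succ]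
    push_cast
    ring

lemma HSrec (α β γ : ℝ) (hβ : β ≠ 0) (n k : ℕ) :
    HS (n + 1) (k + 1) α β γ =
      HS n k α β γ + (β * (k + 1) + γ - n * α) * HS n (k + 1) α β γ := by
  rw [HS_eq, HS_eq, HS_eq, Trec]
  have hf : ((Nat.factorial k : ℝ)) ≠ 0 := Nat.cast_ne_zero.mpr (Nat.factorial_ne_zero k)
  have hf1 : ((Nat.factorial (k + 1) : ℝ)) ≠ 0 := Nat.cast_ne_zero.mpr (Nat.factorial_ne_zero _)
  have hfe : ((Nat.factorial (k + 1) : ℝ)) = ((k : ℝ) + 1) * (Nat.factorial k : ℝ) := by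
    rw [Nat.factorial_succ]; push_cast; ring
  rw [hfe]
  field_simp
  ring

theorem stmt19 (α β γ : ℝ) (hβ : β ≠ 0) :
    (∀ n k : ℕ, 1 ≤ k → k ≤ n + 1 →
      HS (n + 1) k α (-β) (-γ) =
        HS n (k - 1) α (-β) (-γ) + (-(k : ℝ) * β - n * α - γ) * HS n k α (-β) (-γ)) ∧
    (∀ n : ℕ, HS n 0 α β γ = gfact γ α n) ∧
    (∀ n : ℕ, HS n n α β γ = 1) := by
  refine ⟨?_, ?_, ?_⟩
  · intro n k hk1 hk2
    obtain ⟨k', rfl⟩ : ∃ k', k = k' + 1 := ⟨k - 1, by omega⟩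
    have h := HSrec α (-β) (-γ) (neg_ne_zero.mpr hβ) n k'
    rw [h]
    have hc : ((-β) * ((k' : ℝ) + 1) + (-γ) - (n : ℝ) * α)
        = (-((k' + 1 : ℕ) : ℝ)) * β - (n : ℝ) * α - γ := by push_cast; ring
    rw [hc]
    norm_num
  · intro n
    simp [HS, gfact]
  · intro n
    rw [HS_eq, Tnn]
    have hf : ((Nat.factorial n : ℝ)) ≠ 0 := Nat.cast_ne_zero.mpr (Nat.factorial_ne_zero n)
    field_simp
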